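/- Let h₀, h₂ > 0 with h₀ ≤ h₂, let φ > 0 and c ≥ 0. Let H : [0,∞) → ℝ^{N×N} take values in the real symmetric matrices and satisfy, for all t ≥ 0 and all v ∈ ℝᴺ, vᵀH(t)v ≥ h₀‖v‖² and ‖H(t)v‖ ≤ h₂‖v‖. Let ē : [0,∞) → ℝᴺ satisfy ‖ē(t)‖ ≤ c for all t ≥ 0, and let Ǎ : [0,∞) → ℝᴺ be differentiable with Ǎ'(t) = -φ·H(t)·(Ǎ(t) + ē(t)) for all t ≥ 0. Then limsup_{t→∞} ‖Ǎ(t)‖ ≤ (h₂/h₀)·c; in particular Ǎ is uniformly ultimately bounded with a bound depending only on h₀, h₂ and c. -/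

import Mathlib

/-!
Lyapunov argument with `V = ‖Ǎ‖²`. Writing `ρ = (h₂/h₀)·c`, the lower bound on `H` and the bound
`‖H ē‖ ≤ h₂ c = h₀ ρ` give `V' ≤ -φ h₀ (V - ρ²)`, so `V` approaches `ρ²` exponentially fast and
`‖Ǎ‖` is eventually below every number exceeding `ρ`.
-/

open Filter Real Set Topology

theorem two_mul_inner_neg_smul_apply_add_le {E : Type*} [NormedAddCommGroup E]
    [InnerProductSpace ℝ E] (T : E →ₗ[ℝ] E) {x e : E} {φ h₀ ρ : ℝ}
    (hφ : 0 ≤ φ) (hh₀ : 0 ≤ h₀) (hlower : h₀ * ‖x‖ ^ 2 ≤ inner ℝ x (T x))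
    (hupper : ‖T e‖ ≤ h₀ * ρ) :
    2 * inner ℝ x (-φ • T (x + e)) ≤ -(φ * h₀) * (‖x‖ ^ 2 - ρ ^ 2) := by
  have hcross : -(‖x‖ * (h₀ * ρ)) ≤ inner ℝ x (T e) :=
    (neg_le_neg (mul_le_mul_of_nonneg_left hupper (norm_nonneg x))).trans
      (neg_le_of_abs_le (abs_real_inner_le_norm x (T e)))
  have hsq : 0 ≤ φ * h₀ * (‖x‖ - ρ) ^ 2 := by positivity
  rw [map_add, inner_smul_right, inner_add_right]
  nlinarith [mul_le_mul_of_nonneg_left hlower hφ, mul_le_mul_of_nonneg_left hcross hφ]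

theorem le_add_mul_exp_of_hasDerivAt_le_neg_mul_sub {g g' : ℝ → ℝ} {K m : ℝ}
    (hg : ∀ t, 0 ≤ t → HasDerivAt g (g' t) t) (hg' : ∀ t, 0 ≤ t → g' t ≤ -K * (g t - m))
    {t : ℝ} (ht : 0 ≤ t) : g t ≤ m + (g 0 - m) * exp (-K * t) := by
  set F : ℝ → ℝ := fun s => exp (K * s) * (g s - m)
  have hF : ∀ s, 0 ≤ s → HasDerivAt F (exp (K * s) * (g' s + K * (g s - m))) s := fun s hs => by
    refine (((hasDerivAt_id s).const_mul K).exp.mul ((hg s hs).sub_const m)).congr_deriv ?_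
    simp only [id_eq, mul_one]
    ring
  have hanti : AntitoneOn F (Ici 0) := by
    refine antitoneOn_of_hasDerivWithinAt_nonpos (convex_Ici 0)
      (f' := fun s => exp (K * s) * (g' s + K * (g s - m)))
      (fun s hs => (hF s hs).continuousAt.continuousWithinAt) (fun s hs => ?_) (fun s hs => ?_)
    all_goals rw [interior_Ici] at hs
    · exact (hF s hs.le).hasDerivWithinAt
    · have := hg' s hs.le
      exact mul_nonpos_of_nonneg_of_nonpos (exp_pos _).le (by linarith)
  have hFt : exp (K * t) * (g t - m) ≤ g 0 - m := by
    simpa [F] using hanti self_mem_Ici ht ht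
  calc g t = m + exp (-K * t) * (exp (K * t) * (g t - m)) := by
        rw [← mul_assoc, ← exp_add]; simp
    _ ≤ m + exp (-K * t) * (g 0 - m) := by gcongr
    _ = m + (g 0 - m) * exp (-K * t) := by ring

theorem tendsto_add_mul_exp_neg_mul_atTop {K : ℝ} (hK : 0 < K) (m a : ℝ) :
    Tendsto (fun t => m + a * exp (-K * t)) atTop (𝓝 m) := by
  have hexp : Tendsto (fun t => exp (-K * t)) atTop (𝓝 0) :=
    tendsto_exp_atBot.comp (tendsto_id.const_mul_atTop_of_neg (neg_lt_zero.2 hK))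
  simpa using (hexp.const_mul a).const_add m

theorem limsup_le_of_eventually_le_of_tendsto {α : Type*} {l : Filter α} [l.NeBot]
    {u v : α → ℝ} {r : ℝ} (hu : l.IsCoboundedUnder (· ≤ ·) u) (huv : u ≤ᶠ[l] v)
    (hv : Tendsto v l (𝓝 r)) : limsup u l ≤ r :=
  (limsup_le_limsup huv hu hv.isBoundedUnder_le).trans_eq hv.limsup_eq

theorem adaptive_estimator_uub_general (N : ℕ) (h₀ h₂ φ c : ℝ)
    (hh₀ : 0 < h₀) (hh₂ : 0 < h₂) (hφ : 0 < φ) (hc : 0 ≤ c)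
    (H : ℝ → Matrix (Fin N) (Fin N) ℝ)
    (hHlower : ∀ t, 0 ≤ t → ∀ v : EuclideanSpace ℝ (Fin N),
      h₀ * ‖v‖ ^ 2 ≤ (inner ℝ v (Matrix.toEuclideanLin (H t) v) : ℝ))
    (hHupper : ∀ t, 0 ≤ t → ∀ v : EuclideanSpace ℝ (Fin N),
      ‖Matrix.toEuclideanLin (H t) v‖ ≤ h₂ * ‖v‖)
    (ebar Acheck : ℝ → EuclideanSpace ℝ (Fin N))
    (hebar : ∀ t, 0 ≤ t → ‖ebar t‖ ≤ c)
    (hderiv : ∀ t, 0 ≤ t → HasDerivAt Acheck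
      (-φ • Matrix.toEuclideanLin (H t) (Acheck t + ebar t)) t) :
    Filter.limsup (fun t => ‖Acheck t‖) Filter.atTop ≤ (h₂ / h₀) * c ∧
      ∃ b : ℝ, b ≤ (h₂ / h₀) * c + 1 ∧ ∃ T : ℝ, 0 ≤ T ∧ ∀ t ≥ T, ‖Acheck t‖ ≤ b := by
  set ρ := h₂ / h₀ * c
  have hρ : 0 ≤ ρ := by positivity
  have hupper : ∀ t, 0 ≤ t → ‖Matrix.toEuclideanLin (H t) (ebar t)‖ ≤ h₀ * ρ := fun t ht => by
    calc _ ≤ h₂ * ‖ebar t‖ := hHupper t ht _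
      _ ≤ h₂ * c := by gcongr; exact hebar t ht
      _ = h₀ * ρ := by simp only [ρ]; field_simp
  set B := fun t => ρ ^ 2 + (‖Acheck 0‖ ^ 2 - ρ ^ 2) * exp (-(φ * h₀) * t)
  have hV : ∀ t, 0 ≤ t → ‖Acheck t‖ ≤ √(B t) := fun t ht => by
    refine le_sqrt_of_sq_le (le_add_mul_exp_of_hasDerivAt_le_neg_mul_sub
      (fun s hs => (hderiv s hs).norm_sq) (fun s hs => ?_) ht)
    exact two_mul_inner_neg_smul_apply_add_le _ hφ.le hh₀.le (hHlower s hs _) (hupper s hs)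
  have hB : Tendsto (fun t => √(B t)) atTop (𝓝 ρ) := by
    rw [← sqrt_sq hρ]
    exact (tendsto_add_mul_exp_neg_mul_atTop (mul_pos hφ hh₀) (ρ ^ 2) (‖Acheck 0‖ ^ 2 - ρ ^ 2)).sqrt
  have hev : ∀ᶠ t in atTop, ‖Acheck t‖ ≤ √(B t) := eventually_atTop.2 ⟨0, hV⟩
  refine ⟨limsup_le_of_eventually_le_of_tendsto (isCoboundedUnder_le_of_le atTop
    fun _ => norm_nonneg _) hev hB, ρ + 1, le_rfl, ?_⟩
  obtain ⟨T, hT⟩ := eventually_atTop.1 <|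
    (hev.and (hB.eventually (ge_mem_nhds (lt_add_one ρ)))).mono fun _ h => h.1.trans h.2
  exact ⟨max T 0, le_max_right _ _, fun t ht => hT t (le_of_max_le_left ht)⟩

/-- Analytic core of Lemma 7: if `Ǎ' = -φ·H(t)(Ǎ + ē)` where the symmetric matrices `H(t)`
satisfy `vᵀH(t)v ≥ h₀‖v‖²` and `‖H(t)v‖ ≤ h₂‖v‖`, `φ > 0`, and `‖ē(t)‖ ≤ c`, then
`limsup_{t→∞} ‖Ǎ(t)‖ ≤ (h₂/h₀)·c`; in particular `Ǎ` is uniformly ultimately bounded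
with a bound depending only on `h₀, h₂, c`. -/
theorem adaptive_estimator_uub (N : ℕ) (h₀ h₂ φ c : ℝ)
    (hh₀ : 0 < h₀) (hh₂ : 0 < h₂) (hle : h₀ ≤ h₂) (hφ : 0 < φ) (hc : 0 ≤ c)
    (H : ℝ → Matrix (Fin N) (Fin N) ℝ)
    (hHsymm : ∀ t, 0 ≤ t → (H t).IsSymm)
    (hHlower : ∀ t, 0 ≤ t → ∀ v : EuclideanSpace ℝ (Fin N),
      h₀ * ‖v‖ ^ 2 ≤ (inner ℝ v (Matrix.toEuclideanLin (H t) v) : ℝ))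
    (hHupper : ∀ t, 0 ≤ t → ∀ v : EuclideanSpace ℝ (Fin N),
      ‖Matrix.toEuclideanLin (H t) v‖ ≤ h₂ * ‖v‖)
    (ebar Acheck : ℝ → EuclideanSpace ℝ (Fin N))
    (hebar : ∀ t, 0 ≤ t → ‖ebar t‖ ≤ c)
    (hderiv : ∀ t, 0 ≤ t → HasDerivAt Acheck
      (-φ • Matrix.toEuclideanLin (H t) (Acheck t + ebar t)) t) :
    Filter.limsup (fun t => ‖Acheck t‖) Filter.atTop ≤ (h₂ / h₀) * c ∧
      ∃ b : ℝ, b ≤ (h₂ / h₀) * c + 1 ∧ ∃ T : ℝ, 0 ≤ T ∧ ∀ t ≥ T, ‖Acheck t‖ ≤ b :=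
  adaptive_estimator_uub_general N h₀ h₂ φ c hh₀ hh₂ hφ hc H hHlower hHupper ebar Acheck hebar
    hderiv
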